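/- Importance-Weighted Projection Recovers the Matrix–Vector-Squared Product (core identity of Theorem B.18): Let N ≥ 1 and let W ∈ ℂ^{N×N} with columns w_j := W e_j satisfying a_j := ‖w_j‖₂ > 0 for all j; set |ŵ_j⟩ := w_j / a_j. Let |ψ⟩ = Σ_j ψ_j |j⟩ ∈ ℂ^N, define |ψ₁⟩ := Σ_j a_j ψ_j |j⟩ and |φ⟩ := Σ_j ψ_j |j⟩ ⊗ |ŵ_j⟩ ∈ ℂ^N ⊗ ℂ^N. Then (⟨ψ₁| ⊗ I_N)|φ⟩ = Σ_j a_j |ψ_j|² |ŵ_j⟩ = W g(|ψ⟩), where g is the entrywise map g(x) = |x|², i.e. g(|ψ⟩) is the vector with entries |ψ_j|². Moreover, if the spectral norm satisfies ‖W‖₂ ≤ 1, then a_j ≤ 1 for every j and ‖|ψ₁⟩‖₂ ≤ ‖|ψ⟩‖₂. -/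

import Mathlib

/-!
Each summand of the contraction is `conj (a_j ψ_j) * ψ_j * (w_ij / a_j) = a_j |ψ_j|² (w_ij / a_j)`,
and `a_j * (w_ij / a_j) = w_ij`. For the bounds, the `j`-th column of `W` is the image of the unit
vector `e_j`, so `a_j ≤ ‖W‖₂ ≤ 1`, and rescaling coordinates by factors in `[0, 1]` does not
increase the Euclidean norm.
-/

noncomputable section

def toEuc {𝕜 : Type*} [RCLike 𝕜] {ι : Type*} (v : ι → 𝕜) : EuclideanSpace 𝕜 ι := WithLp.toLp 2 v

def specNorm {𝕜 : Type*} [RCLike 𝕜] {m n : Type*} [Fintype m] [Fintype n] [DecidableEq n]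
    (A : Matrix m n 𝕜) : ℝ :=
  ‖LinearMap.toContinuousLinearMap (Matrix.toEuclideanLin A)‖

section

variable {𝕜 : Type*} [RCLike 𝕜] {ι : Type*}

@[simp]
lemma toEuc_apply (v : ι → 𝕜) (i : ι) : toEuc v i = v i := rfl

/-- Holds also for `w = 0`, where `x / 0 = 0`. -/
lemma norm_mul_apply_div_norm [Fintype ι] (w : EuclideanSpace 𝕜 ι) (i : ι) :
    (‖w‖ : 𝕜) * (w i / ‖w‖) = w i := by
  rcases eq_or_ne w 0 with rfl | hw
  · simp
  · have : (‖w‖ : 𝕜) ≠ 0 := by exact_mod_cast norm_ne_zero_iff.mpr hw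
    field_simp

lemma EuclideanSpace.norm_le_norm_of_forall_norm_apply_le [Fintype ι]
    {x y : EuclideanSpace 𝕜 ι} (h : ∀ i, ‖x i‖ ≤ ‖y i‖) : ‖x‖ ≤ ‖y‖ := by
  rw [EuclideanSpace.norm_eq, EuclideanSpace.norm_eq]
  gcongr with i
  exact h i

lemma norm_toEuc_mul_apply_le [Fintype ι] (a : ι → ℝ) (ha : ∀ j, |a j| ≤ 1)
    (ψ : EuclideanSpace 𝕜 ι) : ‖toEuc fun j => (a j : 𝕜) * ψ j‖ ≤ ‖ψ‖ :=
  EuclideanSpace.norm_le_norm_of_forall_norm_apply_le fun j => by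
    rw [toEuc_apply, norm_mul, RCLike.norm_ofReal]
    exact mul_le_of_le_one_left (norm_nonneg _) (ha j)

variable {m n : Type*} [Fintype n] [DecidableEq n]

lemma Matrix.toEuclideanLin_single_one (W : Matrix m n 𝕜) (j : n) :
    Matrix.toEuclideanLin W (EuclideanSpace.single j 1) = toEuc fun i => W i j := by
  ext i
  simp [Matrix.toLpLin_apply, Matrix.mulVec_single]

lemma norm_col_le_specNorm [Fintype m] (W : Matrix m n 𝕜) (j : n) :
    ‖toEuc fun i => W i j‖ ≤ specNorm W := by
  have h := (LinearMap.toContinuousLinearMap (Matrix.toEuclideanLin W)).le_opNorm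
    (EuclideanSpace.single j 1)
  rwa [PiLp.norm_single, norm_one, mul_one, LinearMap.coe_toContinuousLinearMap',
    Matrix.toEuclideanLin_single_one] at h

end

theorem importance_weighted_projection
    (N : ℕ)
    (W : Matrix (Fin N) (Fin N) ℂ)
    (aN : Fin N → ℝ)
    (haN : ∀ j, aN j = ‖toEuc fun i => W i j‖)
    (ψ : EuclideanSpace ℂ (Fin N))
    (ψ₁ : EuclideanSpace ℂ (Fin N))
    (hψ₁ : ψ₁ = toEuc fun j => (aN j : ℂ) * ψ j)
    (φ : EuclideanSpace ℂ (Fin N × Fin N))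
    (hφ : φ = toEuc fun p => ψ p.1 * (W p.2 p.1 / (aN p.1 : ℂ))) :
    ((toEuc fun i => ∑ j, (starRingEnd ℂ) (ψ₁ j) * φ (j, i))
        = (toEuc fun i => ∑ j, (aN j : ℂ) * ((‖ψ j‖ ^ 2 : ℝ) : ℂ)
            * (W i j / (aN j : ℂ)))) ∧
    (toEuc fun i => ∑ j, (starRingEnd ℂ) (ψ₁ j) * φ (j, i))
        = toEuc (W.mulVec fun j => ((‖ψ j‖ ^ 2 : ℝ) : ℂ)) ∧
    (specNorm W ≤ 1 → (∀ j, aN j ≤ 1) ∧ ‖ψ₁‖ ≤ ‖ψ‖) := by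
  have projection : (toEuc fun i => ∑ j, (starRingEnd ℂ) (ψ₁ j) * φ (j, i))
      = toEuc fun i => ∑ j, (aN j : ℂ) * ((‖ψ j‖ ^ 2 : ℝ) : ℂ) * (W i j / (aN j : ℂ)) := by
    subst hψ₁ hφ
    congr 1
    funext i
    refine Finset.sum_congr rfl fun j _ => ?_
    simp only [toEuc_apply, map_mul, Complex.conj_ofReal, Complex.ofReal_pow]
    linear_combination ((aN j : ℂ) * (W i j / aN j)) * Complex.conj_mul' (ψ j)
  refine ⟨projection, projection.trans ?_, fun hW => ?_⟩
  · congr 1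
    funext i
    refine Finset.sum_congr rfl fun j _ => ?_
    have hcol := norm_mul_apply_div_norm (toEuc fun i => W i j) i
    rw [toEuc_apply] at hcol
    rw [mul_right_comm, haN j]
    exact congrArg (· * _) hcol
  · have hcol (j : Fin N) : aN j ≤ 1 := haN j ▸ (norm_col_le_specNorm W j).trans hW
    refine ⟨hcol, hψ₁ ▸ norm_toEuc_mul_apply_le aN (fun j => ?_) ψ⟩
    rw [abs_of_nonneg (haN j ▸ norm_nonneg _)]
    exact hcol j
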